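/- There exist 16 pointwise orthonormal tangent vector fields on the sphere S^255; that is, there exist continuous maps V_1, …, V_16 from the unit sphere S^255 of EuclideanSpace ℝ (Fin 256) to EuclideanSpace ℝ (Fin 256) such that for every p ∈ S^255 and all i, j ∈ {1, …, 16}: ⟨V_i(p), p⟩ = 0, and ⟨V_i(p), V_j(p)⟩ = 1 if i = j and 0 if i ≠ j. -/

import Mathlib

/-!
Index the coordinates of `ℝ^256` by bytes and, for masks `m` and `z`, let `J` be the signed
permutation `(J p) a = (-1)^⟨a, z⟩ p (a xor m)`, where `⟨a, z⟩` is the parity of `a and z`.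
Such a `J` is orthogonal; it is skew, so `J p ⟂ p`, when `⟨m, z⟩` is odd, and two of them
anticommute, so `J p ⟂ J' p`, when `⟨m, z'⟩ + ⟨m', z⟩` is odd. Sixteen mask pairs meeting these
parity conditions give the sixteen fields `p ↦ J_i p`, a signed-permutation model of a
`Cl(0,16)`-module structure on `ℝ^256`.
-/

open scoped RealInnerProductSpace

theorem exists_orthonormal_tangent_fields_of_linearMap {κ E : Type*} [DecidableEq κ]
    [NormedAddCommGroup E] [InnerProductSpace ℝ E] [FiniteDimensional ℝ E] (J : κ → E →ₗ[ℝ] E)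
    (h_tangent : ∀ i p, ⟪J i p, p⟫ = 0) (h_isometry : ∀ i p, ⟪J i p, J i p⟫ = ⟪p, p⟫)
    (h_orthogonal : ∀ i j, i ≠ j → ∀ p, ⟪J i p, J j p⟫ = 0) :
    ∃ V : κ → (Metric.sphere (0 : E) 1 → E), (∀ i, Continuous (V i)) ∧
      (∀ i, ∀ p : Metric.sphere (0 : E) 1, ⟪V i p, (p : E)⟫ = 0) ∧
      (∀ i j, ∀ p : Metric.sphere (0 : E) 1, ⟪V i p, V j p⟫ = if i = j then 1 else 0) := by
  refine ⟨fun i p => J i p, fun i => (J i).continuous_of_finiteDimensional.comp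
    continuous_subtype_val, fun i p => h_tangent i p, fun i j p => ?_⟩
  split_ifs with hij
  · rw [hij, h_isometry, real_inner_self_eq_norm_sq, norm_eq_of_mem_sphere p, one_pow]
  · exact h_orthogonal i j hij p

theorem Fintype.sum_eq_zero_of_comp_perm_eq_neg {ι M : Type*} [Fintype ι] [AddCommGroup M]
    [IsAddTorsionFree M] (e : Equiv.Perm ι) {f : ι → M} (h : ∀ a, f (e a) = -f a) :
    ∑ a, f a = 0 :=
  self_eq_neg.mp <| calc
    ∑ a, f a = ∑ a, f (e a) := (Equiv.sum_comp e f).symm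
    _ = -∑ a, f a := by simp only [h, Finset.sum_neg_distrib]

namespace EuclideanSpace

variable {ι : Type*}

def signedPerm (σ : ι → ι) (s : ι → ℝ) : EuclideanSpace ℝ ι →ₗ[ℝ] EuclideanSpace ℝ ι where
  toFun p := WithLp.toLp 2 fun a => s a * p (σ a)
  map_add' p q := by ext a; simp [mul_add]
  map_smul' c p := by ext a; simp [mul_left_comm]

@[simp]
theorem signedPerm_apply (σ : ι → ι) (s : ι → ℝ) (p : EuclideanSpace ℝ ι) (a : ι) :
    signedPerm σ s p a = s a * p (σ a) := rfl

variable [Fintype ι] {σ τ : ι → ι} {s t : ι → ℝ}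

theorem inner_signedPerm_self_eq_zero (hσ : σ.Involutive) (hs : ∀ a, s (σ a) = -s a)
    (p : EuclideanSpace ℝ ι) : ⟪signedPerm σ s p, p⟫ = 0 := by
  simp only [PiLp.inner_apply, signedPerm_apply, RCLike.inner_apply, conj_trivial]
  refine Fintype.sum_eq_zero_of_comp_perm_eq_neg (hσ.toPerm σ) fun a => ?_
  simp only [Function.Involutive.coe_toPerm, hσ a, hs]
  ring

theorem inner_signedPerm_signedPerm (p : EuclideanSpace ℝ ι) :
    ⟪signedPerm σ s p, signedPerm τ t p⟫ = ∑ a, s a * t a * (p (σ a) * p (τ a)) := by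
  simp only [PiLp.inner_apply, signedPerm_apply, RCLike.inner_apply, conj_trivial]
  exact Finset.sum_congr rfl fun a _ => by ring

theorem inner_signedPerm_self (σ : ι ≃ ι) (hs : ∀ a, s a * s a = 1) (p : EuclideanSpace ℝ ι) :
    ⟪signedPerm σ s p, signedPerm σ s p⟫ = ⟪p, p⟫ := by
  simp only [inner_signedPerm_signedPerm, hs, one_mul]
  simp only [PiLp.inner_apply, RCLike.inner_apply, conj_trivial]
  exact σ.sum_comp fun a => p a * p a

theorem inner_signedPerm_signedPerm_eq_zero (hσ : σ.Involutive) (hτ : τ.Involutive)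
    (hστ : ∀ a, σ (τ a) = τ (σ a))
    (hst : ∀ a, s (σ (τ a)) * t (σ (τ a)) = -(s a * t a)) (p : EuclideanSpace ℝ ι) :
    ⟪signedPerm σ s p, signedPerm τ t p⟫ = 0 := by
  have hρ : (σ ∘ τ).Involutive := fun a => by
    simp only [Function.comp_apply, hστ (σ (τ a)), hσ (τ a), hτ a]
  rw [inner_signedPerm_signedPerm]
  refine Fintype.sum_eq_zero_of_comp_perm_eq_neg (hρ.toPerm _) fun a => ?_
  simp only [Function.Involutive.coe_toPerm, Function.comp_apply, hst, hσ (τ a), ← hστ, hτ a]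
  ring

end EuclideanSpace

def bitParity : ℕ → ℕ → Bool
  | 0, _ => false
  | k + 1, n => xor (n.testBit k) (bitParity k n)

theorem bitParity_xor (k x y : ℕ) :
    bitParity k (x ^^^ y) = xor (bitParity k x) (bitParity k y) := by
  induction k with
  | zero => rfl
  | succ k ih =>
    simp only [bitParity, Nat.testBit_xor, ih]
    cases x.testBit k <;> cases y.testBit k <;> simp

def xorSign (k z a : ℕ) : ℝ := if bitParity k (a &&& z) then -1 else 1

theorem xorSign_xor (k z a b : ℕ) : xorSign k z (a ^^^ b) = xorSign k z a * xorSign k z b := by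
  simp only [xorSign, Nat.and_xor_distrib_right, bitParity_xor]
  cases bitParity k (a &&& z) <;> cases bitParity k (b &&& z) <;> norm_num

theorem xorSign_mul_self (k z a : ℕ) : xorSign k z a * xorSign k z a = 1 := by
  unfold xorSign; split <;> norm_num

theorem xorSign_eq_neg_one_iff {k z a : ℕ} : xorSign k z a = -1 ↔ bitParity k (a &&& z) := by
  unfold xorSign; split <;> norm_num [*]

section XorMasks

variable {k : ℕ}

def xorPerm (m a : Fin (2 ^ k)) : Fin (2 ^ k) :=
  ⟨a ^^^ m, Nat.xor_lt_two_pow a.isLt m.isLt⟩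

theorem xorPerm_involutive (m : Fin (2 ^ k)) : (xorPerm m).Involutive := fun a => by
  simp [xorPerm]

theorem xorPerm_comm (m n a : Fin (2 ^ k)) :
    xorPerm m (xorPerm n a) = xorPerm n (xorPerm m a) := by
  simp [xorPerm, Nat.xor_assoc, Nat.xor_comm m.val]

theorem xorSign_mul_xorSign_of_bitParity_ne {z w a b : ℕ}
    (h : bitParity k (a &&& z) ≠ bitParity k (b &&& w)) : xorSign k z a * xorSign k w b = -1 := by
  unfold xorSign
  revert h
  cases bitParity k (a &&& z) <;> cases bitParity k (b &&& w) <;> norm_num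

def xorSignedPerm (m : Fin (2 ^ k)) (z : ℕ) :
    EuclideanSpace ℝ (Fin (2 ^ k)) →ₗ[ℝ] EuclideanSpace ℝ (Fin (2 ^ k)) :=
  EuclideanSpace.signedPerm (xorPerm m) fun a => xorSign k z a

theorem inner_xorSignedPerm_self_eq_zero {m : Fin (2 ^ k)} {z : ℕ} (h : bitParity k (m &&& z))
    (p : EuclideanSpace ℝ (Fin (2 ^ k))) : ⟪xorSignedPerm m z p, p⟫ = 0 :=
  EuclideanSpace.inner_signedPerm_self_eq_zero (xorPerm_involutive m) (fun a => by
    rw [xorPerm, xorSign_xor, xorSign_eq_neg_one_iff.mpr h, mul_neg_one]) p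

theorem inner_xorSignedPerm_self (m : Fin (2 ^ k)) (z : ℕ) (p : EuclideanSpace ℝ (Fin (2 ^ k))) :
    ⟪xorSignedPerm m z p, xorSignedPerm m z p⟫ = ⟪p, p⟫ :=
  EuclideanSpace.inner_signedPerm_self ((xorPerm_involutive m).toPerm _)
    (fun a => xorSign_mul_self k z a) p

theorem inner_xorSignedPerm_eq_zero {m n : Fin (2 ^ k)} {z w : ℕ} (hm : bitParity k (m &&& z))
    (hn : bitParity k (n &&& w)) (h : bitParity k (n &&& z) ≠ bitParity k (m &&& w))
    (p : EuclideanSpace ℝ (Fin (2 ^ k))) : ⟪xorSignedPerm m z p, xorSignedPerm n w p⟫ = 0 := by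
  refine EuclideanSpace.inner_signedPerm_signedPerm_eq_zero (xorPerm_involutive m)
    (xorPerm_involutive n) (xorPerm_comm m n) (fun a => ?_) p
  have hmn := xorSign_mul_xorSign_of_bitParity_ne h
  simp only [xorPerm, xorSign_xor, xorSign_eq_neg_one_iff.mpr hm, xorSign_eq_neg_one_iff.mpr hn]
  linear_combination (xorSign k z a * xorSign k w a) * hmn

end XorMasks

def hurwitzRadonPerm : Fin 16 → Fin (2 ^ 8) :=
  ![96, 192, 160, 208, 64, 112, 176, 16, 70, 76, 74, 77, 68, 71, 75, 65]

def hurwitzRadonSign : Fin 16 → ℕ :=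
  ![64, 96, 208, 240, 224, 112, 192, 80, 4, 6, 13, 15, 14, 7, 12, 5]

theorem bitParity_hurwitzRadon_self (i : Fin 16) :
    bitParity 8 (hurwitzRadonPerm i &&& hurwitzRadonSign i) := by
  revert i; decide

theorem bitParity_hurwitzRadon_ne {i j : Fin 16} (hij : i ≠ j) :
    bitParity 8 (hurwitzRadonPerm j &&& hurwitzRadonSign i) ≠
      bitParity 8 (hurwitzRadonPerm i &&& hurwitzRadonSign j) := by
  revert i j; decide

/-- There exist 16 pointwise orthonormal tangent vector fields on the
sphere `S^255`: continuous maps `V i` from the unit sphere of `EuclideanSpace ℝ (Fin 256)`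
to `EuclideanSpace ℝ (Fin 256)` with `⟪V i p, p⟫ = 0` and `⟪V i p, V j p⟫ = δᵢⱼ`
at every point `p` of the sphere. -/
theorem exists_sixteen_orthonormal_tangent_fields_on_S255 :
    ∃ V : Fin 16 →
        (Metric.sphere (0 : EuclideanSpace ℝ (Fin 256)) 1 → EuclideanSpace ℝ (Fin 256)),
      (∀ i, Continuous (V i)) ∧
      (∀ i, ∀ p : Metric.sphere (0 : EuclideanSpace ℝ (Fin 256)) 1,
        ⟪V i p, (p : EuclideanSpace ℝ (Fin 256))⟫ = 0) ∧
      (∀ i j, ∀ p : Metric.sphere (0 : EuclideanSpace ℝ (Fin 256)) 1,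
        ⟪V i p, V j p⟫ = if i = j then 1 else 0) :=
  exists_orthonormal_tangent_fields_of_linearMap
    (fun i => xorSignedPerm (hurwitzRadonPerm i) (hurwitzRadonSign i))
    (fun i => inner_xorSignedPerm_self_eq_zero (bitParity_hurwitzRadon_self i))
    (fun i => inner_xorSignedPerm_self (hurwitzRadonPerm i) (hurwitzRadonSign i))
    (fun i j hij => inner_xorSignedPerm_eq_zero (bitParity_hurwitzRadon_self i)
      (bitParity_hurwitzRadon_self j) (bitParity_hurwitzRadon_ne hij))
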